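/- Let X ⊂ ℝⁿ be a compact convex set with nonempty interior, let v ∈ F(X), and let J be a compact subset of the interior of X. Then for every ε > 0 there exists η > 0 such that for every affine function ψ : ℝⁿ → ℝ with ψ(x) ≤ v(x) for all x ∈ X, any two points x₁, x₂ ∈ J satisfying v(x₁) − ψ(x₁) ≤ η and v(x₂) − ψ(x₂) ≤ η obey ‖x₁ − x₂‖ ≤ ε. -/

import Mathlib

open MeasureTheory Filter Metric Set
open scoped RealInnerProductSpace Topology NNReal

noncomputable section

abbrev Euc (n : ℕ) : Type := EuclideanSpace ℝ (Fin n)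

def hessQ {n : ℕ} (v : Euc n → ℝ) (x y : Euc n) : ℝ :=
  iteratedFDeriv ℝ 2 v x ![y, y]

def hessMat {n : ℕ} (v : Euc n → ℝ) (x : Euc n) : Matrix (Fin n) (Fin n) ℝ :=
  Matrix.of fun i j =>
    iteratedFDeriv ℝ 2 v x ![EuclideanSpace.single i 1, EuclideanSpace.single j 1]

def hessDet {n : ℕ} (v : Euc n → ℝ) (x : Euc n) : ℝ := (hessMat v x).det

def IsPAC {n : ℕ} (m : ℕ) (X : Set (Euc n)) (v l : Euc n → ℝ) : Prop :=
  ∃ k : ℕ, 0 < k ∧ k ≤ m ∧ ∃ ψ : Fin k → (Euc n →ᵃ[ℝ] ℝ),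
    (∀ x, l x = ⨆ j, ψ j x) ∧ ∀ x ∈ X, l x ≤ v x

def approxErr {n : ℕ} (p : ℝ) (m : ℕ) (X : Set (Euc n)) (v : Euc n → ℝ)
    (ω : Euc n × ℝ → ℝ) : ℝ :=
  sInf { r | ∃ l, IsPAC m X v l ∧ r = ∫ x in X, (v x - l x) ^ p * ω (x, v x) }

def MemF {n : ℕ} (X : Set (Euc n)) (v : Euc n → ℝ) : Prop :=
  ConvexOn ℝ X v ∧ (∃ L : ℝ≥0, LipschitzOnWith L v X) ∧
    ContDiffOn ℝ 2 v (interior X) ∧ ∀ x ∈ interior X, (hessMat v x).PosDef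

def subgrad {n : ℕ} (v : Euc n → ℝ) (x : Euc n) : Set (Euc n) :=
  {y | ∀ z, v x + ⟪y, z - x⟫ ≤ v z}

def subgradImage {n : ℕ} (v : Euc n → ℝ) (B : Set (Euc n)) : Set (Euc n) :=
  ⋃ x ∈ B, subgrad v x

def MASupport {n : ℕ} (v : Euc n → ℝ) : Set (Euc n) :=
  {x | ∀ U : Set (Euc n), IsOpen U → x ∈ U → 0 < volume (subgradImage v U)}

def IsZadorConst (n : ℕ) (p δ : ℝ) : Prop :=
  ∀ J : Set (Euc n), IsCompact J → volume (frontier J) = 0 → 0 < volume J →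
    Tendsto (fun m : ℕ => (m : ℝ) ^ (2 * p / (n : ℝ)) *
        sInf { r | ∃ S : Finset (Euc n), ↑S ⊆ J ∧ S.card = m ∧
          r = ∫ x in J, sInf ((fun s => ‖x - s‖ ^ (2 * p)) '' ↑S) })
      atTop (nhds (δ * (volume J).toReal ^ (((n : ℝ) + 2 * p) / (n : ℝ))))

/-!
A positive definite Hessian makes `v` strictly convex on `interior X`, so the midpoint gap
`(v x + v y) / 2 - v (midpoint x y)` is positive at distinct points; being continuous, it has a
positive lower bound `c` on the compact set of pairs of points of `J` at distance at least `ε`.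
An affine `ψ ≤ v` satisfies `(ψ x + ψ y) / 2 = ψ (midpoint x y) ≤ v (midpoint x y)`, so the mean
of `v - ψ` at two such points is at least `c`, and `η = c / 2` works.
-/

section Convexity

variable {E : Type*} [NormedAddCommGroup E] [NormedSpace ℝ E] {U s : Set E} {f : E → ℝ}

theorem hasDerivAt_comp_lineMap {a b : E} {t : ℝ}
    (hf : DifferentiableAt ℝ f (AffineMap.lineMap a b t)) :
    HasDerivAt (fun r => f (AffineMap.lineMap a b r))
      (fderiv ℝ f (AffineMap.lineMap a b t) (b - a)) t :=
  hf.hasFDerivAt.comp_hasDerivAt t AffineMap.hasDerivAt_lineMap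

theorem hasDerivAt_fderiv_comp_lineMap {a b : E} {t : ℝ}
    (hf : DifferentiableAt ℝ (fderiv ℝ f) (AffineMap.lineMap a b t)) :
    HasDerivAt (fun r => fderiv ℝ f (AffineMap.lineMap a b r) (b - a))
      (fderiv ℝ (fderiv ℝ f) (AffineMap.lineMap a b t) (b - a) (b - a)) t := by
  simpa using (hf.hasFDerivAt.comp_hasDerivAt t AffineMap.hasDerivAt_lineMap).clm_apply
    (hasDerivAt_const t (b - a))

theorem strictConvexOn_of_fderiv_fderiv_pos (hU : IsOpen U) (hUc : Convex ℝ U)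
    (hf : ContDiffOn ℝ 2 f U) (hpos : ∀ x ∈ U, ∀ d ≠ 0, 0 < fderiv ℝ (fderiv ℝ f) x d d) :
    StrictConvexOn ℝ U f := by
  have hdf : ∀ x ∈ U, DifferentiableAt ℝ f x := fun x hx =>
    (hf.differentiableOn two_ne_zero x hx).differentiableAt (hU.mem_nhds hx)
  have hdf' : ∀ x ∈ U, DifferentiableAt ℝ (fderiv ℝ f) x := fun x hx =>
    ((hf.fderiv_of_isOpen hU le_rfl).differentiableOn one_ne_zero x hx).differentiableAt
      (hU.mem_nhds hx)
  refine ⟨hUc, fun a ha b hb hab s t hs ht hst => ?_⟩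
  have hmem : ∀ r ∈ Icc (0 : ℝ) 1, AffineMap.lineMap a b r ∈ U := fun r hr =>
    hUc.lineMap_mem ha hb hr
  have hline : StrictConvexOn ℝ (Icc (0 : ℝ) 1) (fun r => f (AffineMap.lineMap a b r)) := by
    refine strictConvexOn_of_deriv2_pos (convex_Icc 0 1)
      (hf.continuousOn.comp AffineMap.lineMap_continuous.continuousOn hmem) fun r hr => ?_
    rw [interior_Icc] at hr
    have hrU : ∀ᶠ q in 𝓝 r, AffineMap.lineMap a b q ∈ U :=
      eventually_of_mem (Ioo_mem_nhds hr.1 hr.2) fun q hq => hmem q (Ioo_subset_Icc_self hq)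
    have hderiv : deriv (fun r => f (AffineMap.lineMap a b r)) =ᶠ[𝓝 r]
        fun q => fderiv ℝ f (AffineMap.lineMap a b q) (b - a) :=
      hrU.mono fun q hq => (hasDerivAt_comp_lineMap (hdf _ hq)).deriv
    rw [Function.iterate_succ_apply, Function.iterate_one, hderiv.deriv_eq,
      (hasDerivAt_fderiv_comp_lineMap (hdf' _ hrU.self_of_nhds)).deriv]
    exact hpos _ hrU.self_of_nhds _ (sub_ne_zero.mpr hab.symm)
  have := hline.2 (left_mem_Icc.mpr zero_le_one) (right_mem_Icc.mpr zero_le_one) zero_ne_one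
    hs ht hst
  simp only [smul_eq_mul, mul_zero, mul_one, zero_add, AffineMap.lineMap_apply_zero,
    AffineMap.lineMap_apply_one] at this
  rwa [AffineMap.lineMap_apply_module, ← hst, add_sub_cancel_right] at this

theorem StrictConvexOn.apply_midpoint_lt (hf : StrictConvexOn ℝ s f) {x y : E} (hx : x ∈ s)
    (hy : y ∈ s) (hxy : x ≠ y) : f (midpoint ℝ x y) < (f x + f y) / 2 := by
  have := hf.2 hx hy hxy (by norm_num : (0 : ℝ) < 2⁻¹) (by norm_num : (0 : ℝ) < 2⁻¹) (by norm_num)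
  rw [midpoint_eq_smul_add, invOf_eq_inv, smul_add]
  simp only [smul_eq_mul] at this
  linarith

theorem StrictConvexOn.exists_pos_le_midpoint_gap (hf : StrictConvexOn ℝ s f)
    (hfc : ContinuousOn f s) {J : Set E} (hJ : IsCompact J) (hJs : J ⊆ s) {ε : ℝ} (hε : 0 < ε) :
    ∃ c > 0, ∀ x ∈ J, ∀ y ∈ J, ε ≤ ‖x - y‖ → c ≤ (f x + f y) / 2 - f (midpoint ℝ x y) := by
  set K := (J ×ˢ J) ∩ {p : E × E | ε ≤ ‖p.1 - p.2‖}
  have hK : IsCompact K := (hJ.prod hJ).inter_right (isClosed_le continuous_const (by fun_prop))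
  have hKs : ∀ p ∈ K, p.1 ∈ s ∧ p.2 ∈ s ∧ midpoint ℝ p.1 p.2 ∈ s := fun p hp =>
    ⟨hJs hp.1.1, hJs hp.1.2, hf.1.midpoint_mem (hJs hp.1.1) (hJs hp.1.2)⟩
  have hmid : Continuous fun p : E × E => midpoint ℝ p.1 p.2 := by
    simp_rw [midpoint_eq_smul_add]
    fun_prop
  have hgap : ContinuousOn (fun p : E × E => (f p.1 + f p.2) / 2 - f (midpoint ℝ p.1 p.2)) K :=
    (((hfc.comp continuousOn_fst fun p hp => (hKs p hp).1).add
      (hfc.comp continuousOn_snd fun p hp => (hKs p hp).2.1)).div_const 2).sub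
      (hfc.comp hmid.continuousOn fun p hp => (hKs p hp).2.2)
  obtain ⟨c, hc, hcK⟩ := hK.exists_forall_le' hgap fun p hp => by
    have hne : p.1 ≠ p.2 := fun h => by
      have hfar : ε ≤ ‖p.1 - p.2‖ := hp.2
      rw [h, sub_self, norm_zero] at hfar
      linarith
    exact sub_pos.mpr (hf.apply_midpoint_lt (hKs p hp).1 (hKs p hp).2.1 hne)
  exact ⟨c, hc, fun x hx y hy hxy => hcK (x, y) ⟨⟨hx, hy⟩, hxy⟩⟩

end Convexity

theorem hessMat_eq_toMatrix {n : ℕ} (v : Euc n → ℝ) (x : Euc n) :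
    hessMat v x = LinearMap.BilinForm.toMatrix (EuclideanSpace.basisFun (Fin n) ℝ).toBasis
      ((ContinuousLinearMap.coeLM ℝ).comp
        (fderiv ℝ (fderiv ℝ v) x : Euc n →ₗ[ℝ] Euc n →L[ℝ] ℝ)) := by
  ext i j
  simp [hessMat, iteratedFDeriv_two_apply]

theorem fderiv_fderiv_pos_of_posDef {n : ℕ} {v : Euc n → ℝ} {x : Euc n}
    (hx : (hessMat v x).PosDef) {d : Euc n} (hd : d ≠ 0) :
    0 < fderiv ℝ (fderiv ℝ v) x d d := by
  rw [hessMat_eq_toMatrix] at hx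
  have h := hx.dotProduct_mulVec_pos (x := WithLp.ofLp d) (by simpa using hd)
  have key := LinearMap.BilinForm.apply_eq_dotProduct_toMatrix_mulVec
    (EuclideanSpace.basisFun (Fin n) ℝ).toBasis
    ((ContinuousLinearMap.coeLM ℝ).comp
      (fderiv ℝ (fderiv ℝ v) x : Euc n →ₗ[ℝ] Euc n →L[ℝ] ℝ)) d d
  exact key ▸ h

theorem shrinking_pieces_general (n : ℕ) (X : Set (Euc n))
    (hXconv : Convex ℝ X)
    (v : Euc n → ℝ) (hv : MemF X v)
    (J : Set (Euc n)) (hJc : IsCompact J) (hJX : J ⊆ interior X) :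
    ∀ ε : ℝ, 0 < ε → ∃ η : ℝ, 0 < η ∧
      ∀ ψ : Euc n →ᵃ[ℝ] ℝ, (∀ x ∈ X, ψ x ≤ v x) →
        ∀ x₁ ∈ J, ∀ x₂ ∈ J,
          v x₁ - ψ x₁ ≤ η → v x₂ - ψ x₂ ≤ η → ‖x₁ - x₂‖ ≤ ε := by
  intro ε hε
  obtain ⟨-, -, hC2, hpd⟩ := hv
  have hstrict : StrictConvexOn ℝ (interior X) v :=
    strictConvexOn_of_fderiv_fderiv_pos isOpen_interior hXconv.interior hC2
      fun x hx _ hd => fderiv_fderiv_pos_of_posDef (hpd x hx) hd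
  obtain ⟨c, hc, hgap⟩ := hstrict.exists_pos_le_midpoint_gap hC2.continuousOn hJc hJX hε
  refine ⟨c / 2, half_pos hc, fun ψ hψ x₁ hx₁ x₂ hx₂ h₁ h₂ => ?_⟩
  by_contra! hfar
  have hψmid : ψ (midpoint ℝ x₁ x₂) = (ψ x₁ + ψ x₂) / 2 := by
    rw [AffineMap.map_midpoint, midpoint_eq_smul_add, invOf_eq_inv, smul_eq_mul]
    ring
  have hmid : ψ (midpoint ℝ x₁ x₂) ≤ v (midpoint ℝ x₁ x₂) :=
    hψ _ (interior_subset (hXconv.interior.midpoint_mem (hJX hx₁) (hJX hx₂)))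
  linarith [hgap x₁ hx₁ x₂ hx₂ hfar.le]

/-- points of a compact subset of the interior where a circumscribed
affine function is `η`-close to `v` are `ε`-close to each other. -/
theorem shrinking_pieces (n : ℕ) (X : Set (Euc n)) (hXc : IsCompact X)
    (hXconv : Convex ℝ X) (hXint : (interior X).Nonempty)
    (v : Euc n → ℝ) (hv : MemF X v)
    (J : Set (Euc n)) (hJc : IsCompact J) (hJX : J ⊆ interior X) :
    ∀ ε : ℝ, 0 < ε → ∃ η : ℝ, 0 < η ∧
      ∀ ψ : Euc n →ᵃ[ℝ] ℝ, (∀ x ∈ X, ψ x ≤ v x) →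
        ∀ x₁ ∈ J, ∀ x₂ ∈ J,
          v x₁ - ψ x₁ ≤ η → v x₂ - ψ x₂ ≤ η → ‖x₁ - x₂‖ ≤ ε :=
  shrinking_pieces_general n X hXconv v hv J hJc hJX
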